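/- arXiv:2405.05383 — 4 statements merged into one kernel-verified Lean document; each statement's English description precedes it below -/
import Mathlib

section
/- Let Z be a norm-closed subspace of bounded operators between Hilbert spaces (a TRO, i.e. ZZ*Z ⊆ Z), let z ∈ Z be a tripotent (z = z z* z), and let b ∈ Z with ‖b‖ ≤ 1. If ‖z + b‖ ≤ 1 and ‖z - b‖ ≤ 1, then b = (1 - z z*) b (1 - z* z). -/
/-!
For `w` in the range of the initial projection `z* z` of a tripotent, `‖z w‖ = ‖w‖`, and
`‖z w ± b w‖ ≤ ‖w‖`; the parallelogram law then forces `b w = 0`, i.e. `b z* z = 0`.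
Applying the same argument to `z*, b*` gives `z z* b = 0`, and expanding
`(1 - z z*) b (1 - z* z)` yields `b`.
-/

open ContinuousLinearMap

theorem eq_zero_of_norm_add_le_of_norm_sub_le (𝕜 : Type*) {E : Type*} [RCLike 𝕜]
    [NormedAddCommGroup E] [InnerProductSpace 𝕜 E] {x y : E}
    (hadd : ‖x + y‖ ≤ ‖x‖) (hsub : ‖x - y‖ ≤ ‖x‖) : y = 0 := by
  have hpar := parallelogram_law_with_norm 𝕜 x y
  have hadd' := mul_self_le_mul_self (norm_nonneg _) hadd
  have hsub' := mul_self_le_mul_self (norm_nonneg _) hsub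
  have hy : ‖y‖ * ‖y‖ ≤ 0 := by linarith
  exact norm_eq_zero.mp (mul_self_eq_zero.mp (le_antisymm hy (mul_self_nonneg _)))

section Tripotent

variable {𝕜 : Type*} [RCLike 𝕜] {K H : Type*}
  [NormedAddCommGroup K] [InnerProductSpace 𝕜 K] [CompleteSpace K]
  [NormedAddCommGroup H] [InnerProductSpace 𝕜 H] [CompleteSpace H]

theorem ContinuousLinearMap.norm_apply_eq_of_adjoint_apply_eq (z : K →L[𝕜] H) {w : K}
    (hw : adjoint z (z w) = w) : ‖z w‖ = ‖w‖ := by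
  have hinner : (inner 𝕜 (z w) (z w) : 𝕜) = inner 𝕜 w w := by
    rw [← adjoint_inner_left, hw]
  have hsq : ‖z w‖ ^ 2 = ‖w‖ ^ 2 := by
    simpa only [inner_self_eq_norm_sq] using congrArg RCLike.re hinner
  exact (sq_eq_sq₀ (norm_nonneg _) (norm_nonneg _)).mp hsq

def IsTripotent (z : K →L[𝕜] H) : Prop :=
  z.comp ((adjoint z).comp z) = z

theorem isTripotent_adjoint {z : K →L[𝕜] H} (hz : IsTripotent z) :
    IsTripotent (adjoint z) := by
  unfold IsTripotent at hz ⊢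
  have h := congrArg ContinuousLinearMap.adjoint hz
  rw [adjoint_adjoint]
  rwa [adjoint_comp, adjoint_comp, adjoint_adjoint, comp_assoc] at h

theorem IsTripotent.comp_adjoint_comp_self_eq_zero {z b : K →L[𝕜] H} (hz : IsTripotent z)
    (hplus : ‖z + b‖ ≤ 1) (hminus : ‖z - b‖ ≤ 1) :
    b.comp ((adjoint z).comp z) = 0 := by
  ext ξ
  set w := adjoint z (z ξ)
  have hw : adjoint z (z w) = w := by
    simpa only [comp_apply] using congrArg (fun A => adjoint z (A ξ)) hz
  have hnorm := z.norm_apply_eq_of_adjoint_apply_eq hw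
  have hadd : ‖z w + b w‖ ≤ ‖z w‖ := by
    simpa only [hnorm, add_apply, one_mul] using le_of_opNorm_le _ hplus w
  have hsub : ‖z w - b w‖ ≤ ‖z w‖ := by
    simpa only [hnorm, sub_apply, one_mul] using le_of_opNorm_le _ hminus w
  exact eq_zero_of_norm_add_le_of_norm_sub_le 𝕜 hadd hsub

theorem IsTripotent.self_comp_adjoint_comp_eq_zero {z b : K →L[𝕜] H} (hz : IsTripotent z)
    (hplus : ‖z + b‖ ≤ 1) (hminus : ‖z - b‖ ≤ 1) :
    (z.comp (adjoint z)).comp b = 0 := by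
  have hplus' : ‖adjoint z + adjoint b‖ ≤ 1 := by
    rwa [← map_add, LinearIsometryEquiv.norm_map]
  have hminus' : ‖adjoint z - adjoint b‖ ≤ 1 := by
    rwa [← map_sub, LinearIsometryEquiv.norm_map]
  have h := congrArg ContinuousLinearMap.adjoint
    ((isTripotent_adjoint hz).comp_adjoint_comp_self_eq_zero hplus' hminus')
  simpa only [adjoint_comp, adjoint_adjoint, comp_assoc, map_zero] using h

end Tripotent

theorem stmt_0_general {𝕜 : Type*} [RCLike 𝕜] {K H : Type*}
    [NormedAddCommGroup K] [InnerProductSpace 𝕜 K] [CompleteSpace K]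
    [NormedAddCommGroup H] [InnerProductSpace 𝕜 H] [CompleteSpace H]
    (z b : K →L[𝕜] H)
    (htri : z.comp ((adjoint z).comp z) = z)
    (hplus : ‖z + b‖ ≤ 1) (hminus : ‖z - b‖ ≤ 1) :
    b = ((1 - z.comp (adjoint z)).comp b).comp (1 - (adjoint z).comp z) := by
  have hz : IsTripotent z := htri
  rw [sub_comp, hz.self_comp_adjoint_comp_eq_zero hplus hminus, sub_zero, one_def, id_comp,
    comp_sub, hz.comp_adjoint_comp_self_eq_zero hplus hminus, sub_zero, one_def, comp_id]

/-- TRO orthogonality lemma. -/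
theorem stmt_0 {𝕜 : Type*} [RCLike 𝕜] {K H : Type*}
    [NormedAddCommGroup K] [InnerProductSpace 𝕜 K] [CompleteSpace K]
    [NormedAddCommGroup H] [InnerProductSpace 𝕜 H] [CompleteSpace H]
    (Z : Submodule 𝕜 (K →L[𝕜] H)) (hZclosed : IsClosed (Z : Set (K →L[𝕜] H)))
    (hTRO : ∀ x ∈ Z, ∀ y ∈ Z, ∀ w ∈ Z, (x.comp ((adjoint y).comp w)) ∈ Z)
    (z b : K →L[𝕜] H) (hz : z ∈ Z) (hb : b ∈ Z)
    (htri : z.comp ((adjoint z).comp z) = z)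
    (hbnorm : ‖b‖ ≤ 1)
    (hplus : ‖z + b‖ ≤ 1) (hminus : ‖z - b‖ ≤ 1) :
    b = ((1 - z.comp (adjoint z)).comp b).comp (1 - (adjoint z).comp z) :=
  stmt_0_general z b htri hplus hminus
end

section
/- Let A be a unital Banach algebra and P : A → A a linear idempotent such that ‖x‖ = max{‖P x‖, ‖x - P x‖} for all x ∈ A (an M-projection). Then for every contractive unital linear functional φ on A, φ(P(1)) ≥ 0. -/
/-!
Write `a = φ (P 1)` and `b = φ (1 - P 1)`, so `a + b = φ 1 = 1`. Since `P` is an M-projection,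
`c • P x + d • (x - P x)` has norm at most `‖x‖` whenever `‖c‖, ‖d‖ ≤ 1`; choosing such `c, d`
that rotate `φ (P x)` and `φ (x - P x)` onto the nonnegative reals gives
`‖a‖ + ‖b‖ ≤ ‖φ‖ ≤ 1 = a + b`. Equality in the triangle inequality then forces `a = ‖a‖`.
-/

open RCLike

namespace RCLike

variable {𝕜 : Type*} [RCLike 𝕜]

lemma exists_norm_le_one_mul_eq_norm (a : 𝕜) : ∃ c : 𝕜, ‖c‖ ≤ 1 ∧ c * a = ‖a‖ :=
  ⟨‖a‖ / a, by rw [norm_div, norm_ofReal, abs_norm]; exact div_self_le_one _,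
    div_mul_cancel_of_imp fun h => by simp [h]⟩

lemma eq_norm_of_add_eq_one {a b : 𝕜} (hab : a + b = 1) (hnorm : ‖a‖ + ‖b‖ ≤ 1) :
    a = ‖a‖ := by
  have hre : re a + re b = 1 := by rw [← map_add, hab, one_re]
  exact norm_le_re_iff_eq_norm.1 (by linarith [re_le_norm b])

end RCLike

section MProjection

variable {𝕜 X : Type*} [RCLike 𝕜] [NormedAddCommGroup X] [NormedSpace 𝕜 X]
  (P : X →L[𝕜] X)

lemma norm_smul_add_smul_sub_le_of_mProjection (hP2 : ∀ x, P (P x) = P x)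
    (hM : ∀ x : X, ‖x‖ = max ‖P x‖ ‖x - P x‖) (x : X) {c d : 𝕜} (hc : ‖c‖ ≤ 1)
    (hd : ‖d‖ ≤ 1) : ‖c • P x + d • (x - P x)‖ ≤ ‖x‖ := by
  have hPz : P (c • P x + d • (x - P x)) = c • P x := by simp [hP2]
  rw [hM, hPz, add_sub_cancel_left, norm_smul, norm_smul]
  exact (max_le_max (mul_le_of_le_one_left (norm_nonneg _) hc)
    (mul_le_of_le_one_left (norm_nonneg _) hd)).trans (hM x).ge

lemma norm_apply_add_norm_apply_sub_le_of_mProjection (hP2 : ∀ x, P (P x) = P x)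
    (hM : ∀ x : X, ‖x‖ = max ‖P x‖ ‖x - P x‖) (φ : X →L[𝕜] 𝕜) (x : X) :
    ‖φ (P x)‖ + ‖φ (x - P x)‖ ≤ ‖φ‖ * ‖x‖ := by
  obtain ⟨c, hc, hca⟩ := exists_norm_le_one_mul_eq_norm (φ (P x))
  obtain ⟨d, hd, hdb⟩ := exists_norm_le_one_mul_eq_norm (φ (x - P x))
  have hφz : φ (c • P x + d • (x - P x)) = ((‖φ (P x)‖ + ‖φ (x - P x)‖ : ℝ) : 𝕜) := by
    rw [map_add, map_smul, map_smul, smul_eq_mul, smul_eq_mul, hca, hdb, ofReal_add]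
  calc ‖φ (P x)‖ + ‖φ (x - P x)‖ = ‖φ (c • P x + d • (x - P x))‖ := by
        rw [hφz, norm_ofReal, abs_of_nonneg (by positivity)]
    _ ≤ ‖φ‖ * ‖c • P x + d • (x - P x)‖ := φ.le_opNorm _
    _ ≤ ‖φ‖ * ‖x‖ := by
        gcongr
        exact norm_smul_add_smul_sub_le_of_mProjection P hP2 hM x hc hd

end MProjection

/-- for an M-projection P on a unital Banach algebra and a
contractive unital functional φ, one has φ(P(1)) ≥ 0 (a nonnegative real). -/
theorem stmt_6 {𝕜 : Type*} [RCLike 𝕜] {A : Type*} [NormedRing A]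
    [NormOneClass A] [NormedAlgebra 𝕜 A]
    (P : A →L[𝕜] A) (hP2 : ∀ x, P (P x) = P x)
    (hM : ∀ x : A, ‖x‖ = max ‖P x‖ ‖x - P x‖)
    (φ : A →L[𝕜] 𝕜) (hφ : ‖φ‖ ≤ 1) (hφ1 : φ 1 = 1) :
    ∃ r : ℝ, 0 ≤ r ∧ φ (P 1) = (r : 𝕜) := by
  have hsum : φ (P 1) + φ (1 - P 1) = 1 := by rw [← map_add, add_sub_cancel, hφ1]
  have hnorm : ‖φ (P 1)‖ + ‖φ (1 - P 1)‖ ≤ 1 :=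
    (norm_apply_add_norm_apply_sub_le_of_mProjection P hP2 hM φ 1).trans
      (by rwa [norm_one, mul_one])
  exact ⟨‖φ (P 1)‖, norm_nonneg _, eq_norm_of_add_eq_one hsum hnorm⟩
end

section
/- Define P : ℍ → ℍ by P(α) = (α + ᾱ)/2. Then P is an idempotent ℝ-linear map satisfying ‖P(α)‖² + ‖α - P(α)‖² = ‖α‖² for all α ∈ ℍ, but there do not exist h, k ∈ ℍ with h̄ = h, k̄ = k, and P(x) = hx + xk for all x ∈ ℍ. -/
/-!
`P` is `α ↦ α.re`, the orthogonal projection onto the real line, whose complement is `α ↦ α.im`.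
Selfadjoint quaternions are real, hence central, so `x ↦ h * x + x * k` is multiplication by the
scalar `h.re + k.re`; but `P` fixes `1` and kills `i`, so it is no scalar multiple of the identity.
-/

open Quaternion

namespace Quaternion

theorem add_star_div_two {R : Type*} [Field R] [LinearOrder R] [IsStrictOrderedRing R]
    (a : ℍ[R]) : (a + star a) / 2 = a.re := by
  have h2 : (2 : ℍ[R]) ≠ 0 := fun h => two_ne_zero (congrArg QuaternionAlgebra.re h)
  rw [div_eq_iff h2, self_add_star, two_mul, mul_two]

theorem inner_coe_im (r : ℝ) (a : ℍ) : inner ℝ (r : ℍ) a.im = 0 := by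
  simp [inner_def]

theorem norm_coe_re_sq_add_norm_im_sq (a : ℍ) : ‖(a.re : ℍ)‖ ^ 2 + ‖a.im‖ ^ 2 = ‖a‖ ^ 2 := by
  conv_rhs => rw [← re_add_im a]
  simp only [sq]
  exact (norm_add_sq_eq_norm_sq_add_norm_sq_real (inner_coe_im _ _)).symm

theorem mul_add_mul_eq_smul_of_star_eq_self {R : Type*} [CommRing R] [NoZeroDivisors R]
    [CharZero R] {h k : ℍ[R]} (hh : star h = h) (hk : star k = k) (x : ℍ[R]) :
    h * x + x * k = (h.re + k.re) • x := by
  rw [star_eq_self] at hh hk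
  rw [hh, hk, coe_mul_eq_smul, mul_coe_eq_smul, add_smul]
  simp

theorem not_exists_star_eq_self_coe_re_eq_mul_add_mul {R : Type*} [CommRing R]
    [NoZeroDivisors R] [CharZero R] :
    ¬ ∃ h k : ℍ[R], star h = h ∧ star k = k ∧ ∀ x : ℍ[R], (x.re : ℍ[R]) = h * x + x * k := by
  rintro ⟨h, k, hh, hk, hP⟩
  simp only [mul_add_mul_eq_smul_of_star_eq_self hh hk] at hP
  have h1 : h.re + k.re = 1 := by simpa using (congrArg (·.re) (hP 1)).symm
  have hreal : ∀ x : ℍ[R], (x.re : ℍ[R]) = x := by simpa [h1] using hP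
  simpa using congrArg (·.imI) (hreal ⟨0, 1, 0, 0⟩)

end Quaternion

/-- the selfadjoint-part map P(α) = (α + ᾱ)/2 on ℍ is an
idempotent real-linear map satisfying the Pythagorean identity, but is not of
the form x ↦ hx + xk for selfadjoint h, k. -/
theorem stmt_10 (P : ℍ[ℝ] → ℍ[ℝ]) (hP : ∀ α, P α = (α + star α) / 2) :
    (∀ α, P (P α) = P α) ∧
      (∀ α β : ℍ[ℝ], P (α + β) = P α + P β) ∧
      (∀ (r : ℝ) (α : ℍ[ℝ]), P (r • α) = r • P α) ∧
      (∀ α : ℍ[ℝ], ‖P α‖ ^ 2 + ‖α - P α‖ ^ 2 = ‖α‖ ^ 2) ∧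
      ¬ ∃ h k : ℍ[ℝ], star h = h ∧ star k = k ∧ ∀ x : ℍ[ℝ], P x = h * x + x * k := by
  obtain rfl : P = fun α => (α.re : ℍ) := funext fun α => (hP α).trans (add_star_div_two α)
  refine ⟨fun α => ?_, fun α β => ?_, fun r α => ?_, fun α => ?_,
    not_exists_star_eq_self_coe_re_eq_mul_add_mul⟩
  · simp
  · simp
  · simp [smul_coe]
  · simpa using norm_coe_re_sq_add_norm_im_sq α
end

section
/- Let A be a unital complex C*-algebra, P an M-projection on A, z = P(1), and φ a state on A with φ(z) ≠ 0. Then ψ := ‖P*φ‖^{-1} P*φ is a state on A and ψ(z) = 1. -/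
/-! Rotating `P x` and `(1 - P) y` by unimodular scalars and adding them gives a vector of norm
at most `max ‖x‖ ‖y‖` on which `φ` takes the value `‖φ (P x)‖ + ‖φ ((1 - P) y)‖`; hence
`‖φ ∘ P‖ + ‖φ ∘ (1 - P)‖ = ‖φ‖`. For a state, `1 = φ (P 1) + φ ((1 - P) 1)` with `‖1‖ = 1` then
forces `φ (P 1)` to be the nonnegative real `‖φ ∘ P‖`, which is nonzero since `φ z ≠ 0`, and
normalizing `φ ∘ P` gives a state taking the value `1` at `z = P 1`. -/

namespace IsMprojection

variable {𝕜 E : Type*} [RCLike 𝕜] [NormedAddCommGroup E] [NormedSpace 𝕜 E] {P : E →L[𝕜] E}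

lemma apply_apply (hP : IsMprojection E P) (x : E) : P (P x) = P x :=
  congr($(hP.proj.eq) x)

lemma norm_apply_le (hP : IsMprojection E P) (x : E) : ‖P x‖ ≤ ‖x‖ :=
  (hP.Mnorm x).symm ▸ le_max_left _ _

lemma norm_one_sub_apply_le (hP : IsMprojection E P) (x : E) : ‖(1 - P) x‖ ≤ ‖x‖ :=
  (hP.Mnorm x).symm ▸ le_max_right _ _

lemma norm_le_max (hP : IsMprojection E P) (x : E) : ‖x‖ ≤ max ‖P x‖ ‖(1 - P) x‖ :=
  (hP.Mnorm x).le

lemma norm_apply_add_norm_apply_le (hP : IsMprojection E P) (φ : E →L[𝕜] 𝕜) {x y : E}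
    (hx : ‖x‖ ≤ 1) (hy : ‖y‖ ≤ 1) : ‖φ (P x)‖ + ‖φ ((1 - P) y)‖ ≤ ‖φ‖ := by
  obtain ⟨c, hc, hcx⟩ := RCLike.exists_norm_eq_mul_self (φ (P x))
  obtain ⟨d, hd, hdy⟩ := RCLike.exists_norm_eq_mul_self (φ ((1 - P) y))
  set u := c • P x + d • (1 - P) y
  have hPu : P u = c • P x := by simp [u, hP.apply_apply]
  have hQu : (1 - P) u = d • (1 - P) y := by simp [u, hP.apply_apply]
  have hu : ‖u‖ ≤ 1 := by
    refine (hP.norm_le_max u).trans (max_le ?_ ?_)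
    · rw [hPu, norm_smul, hc, one_mul]; exact (hP.norm_apply_le x).trans hx
    · rw [hQu, norm_smul, hd, one_mul]; exact (hP.norm_one_sub_apply_le y).trans hy
  have hφu : φ u = ((‖φ (P x)‖ + ‖φ ((1 - P) y)‖ : ℝ) : 𝕜) := by
    rw [RCLike.ofReal_add, hcx, hdy]; simp only [u, map_add, map_smul, smul_eq_mul]
  calc ‖φ (P x)‖ + ‖φ ((1 - P) y)‖ = ‖φ u‖ := by
        rw [hφu, RCLike.norm_of_nonneg (by positivity)]
    _ ≤ ‖φ‖ := φ.le_opNorm_of_le hu |>.trans_eq (mul_one _)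

/-- The adjoint of an M-projection is an L-projection. -/
lemma norm_comp_add_norm_comp_one_sub (hP : IsMprojection E P) (φ : E →L[𝕜] 𝕜) :
    ‖φ.comp P‖ + ‖φ.comp (1 - P)‖ = ‖φ‖ := by
  refine le_antisymm (le_of_forall_pos_lt_add fun ε hε ↦ ?_) ?_
  · obtain ⟨x, hx, hφx⟩ := (φ.comp P).exists_lt_apply_of_lt_opNorm (sub_lt_self _ (half_pos hε))
    obtain ⟨y, hy, hφy⟩ :=
      (φ.comp (1 - P)).exists_lt_apply_of_lt_opNorm (sub_lt_self _ (half_pos hε))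
    have := hP.norm_apply_add_norm_apply_le φ hx.le hy.le
    simp only [ContinuousLinearMap.comp_apply] at hφx hφy
    linarith
  · calc ‖φ‖ = ‖φ.comp P + φ.comp (1 - P)‖ := by
          rw [← ContinuousLinearMap.comp_add, add_sub_cancel, ContinuousLinearMap.one_def,
            ContinuousLinearMap.comp_id]
      _ ≤ ‖φ.comp P‖ + ‖φ.comp (1 - P)‖ := norm_add_le _ _

lemma apply_apply_eq_norm_comp (hP : IsMprojection E P) {φ : E →L[𝕜] 𝕜} (hφ : ‖φ‖ ≤ 1)
    {e : E} (he : ‖e‖ ≤ 1) (hφe : φ e = 1) : φ (P e) = ‖φ.comp P‖ := by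
  have hsum : φ (P e) + φ ((1 - P) e) = 1 := by simp [hφe]
  have hPe : ‖φ (P e)‖ ≤ ‖φ.comp P‖ := (φ.comp P).le_opNorm_of_le he |>.trans_eq (mul_one _)
  have hQe : ‖φ ((1 - P) e)‖ ≤ ‖φ.comp (1 - P)‖ :=
    (φ.comp (1 - P)).le_opNorm_of_le he |>.trans_eq (mul_one _)
  have hL := hP.norm_comp_add_norm_comp_one_sub φ
  have hre : RCLike.re (φ (P e)) + RCLike.re (φ ((1 - P) e)) = 1 := by
    rw [← map_add, hsum, RCLike.one_re]
  have hPre := RCLike.re_le_norm (φ (P e))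
  have hQre := RCLike.re_le_norm (φ ((1 - P) e))
  have hnorm : ‖φ (P e)‖ = ‖φ.comp P‖ := by linarith
  rw [(RCLike.norm_le_re_iff_eq_norm (z := φ (P e))).mp (by linarith), hnorm]

end IsMprojection

theorem stmt_19_general {A : Type*} [NormedRing A] [StarRing A] [CStarRing A]
    [NormedAlgebra ℂ A]
    (P : A →L[ℂ] A) (hP2 : ∀ x, P (P x) = P x)
    (hM : ∀ x : A, ‖x‖ = max ‖P x‖ ‖x - P x‖)
    (z : A) (hz : P 1 = z)
    (φ : A →L[ℂ] ℂ) (hφnorm : ‖φ‖ = 1) (hφ1 : φ 1 = 1)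
    (hφz : φ z ≠ 0) :
    ‖(‖φ.comp P‖⁻¹ : ℝ) • φ.comp P‖ = 1 ∧
      ((‖φ.comp P‖⁻¹ : ℝ) • φ.comp P) 1 = 1 ∧
      ((‖φ.comp P‖⁻¹ : ℝ) • φ.comp P) z = 1 := by
  have hPM : IsMprojection A P := ⟨ContinuousLinearMap.ext hP2, by simpa using hM⟩
  have : Nontrivial A := ⟨⟨1, 0, fun h ↦ by simp [h] at hφ1⟩⟩
  have hval : φ (P 1) = ‖φ.comp P‖ :=
    hPM.apply_apply_eq_norm_comp hφnorm.le CStarRing.norm_one.le hφ1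
  have hr : ‖φ.comp P‖ ≠ 0 := fun h ↦ hφz (by rw [← hz, hval, h, Complex.ofReal_zero])
  have hPz : P z = P 1 := hz ▸ hP2 1
  refine ⟨by rw [norm_smul, norm_inv, norm_norm, inv_mul_cancel₀ hr], ?_, ?_⟩ <;>
    simp [hPz, hval, hr]

/-- if P is an M-projection on a unital C*-algebra, z = P(1), and
φ is a state with φ(z) ≠ 0, then ψ = ‖P*φ‖⁻¹ P*φ is a state with ψ(z) = 1. -/
theorem stmt_19 {A : Type*} [NormedRing A] [StarRing A] [CStarRing A]
    [CompleteSpace A] [NormedAlgebra ℂ A] [StarModule ℂ A]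
    (P : A →L[ℂ] A) (hP2 : ∀ x, P (P x) = P x)
    (hM : ∀ x : A, ‖x‖ = max ‖P x‖ ‖x - P x‖)
    (z : A) (hz : P 1 = z)
    (φ : A →L[ℂ] ℂ) (hφnorm : ‖φ‖ = 1) (hφ1 : φ 1 = 1)
    (hφz : φ z ≠ 0) :
    ‖(‖φ.comp P‖⁻¹ : ℝ) • φ.comp P‖ = 1 ∧
      ((‖φ.comp P‖⁻¹ : ℝ) • φ.comp P) 1 = 1 ∧
      ((‖φ.comp P‖⁻¹ : ℝ) • φ.comp P) z = 1 :=
  stmt_19_general P hP2 hM z hz φ hφnorm hφ1 hφz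
end
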